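/- arXiv:2410.23491 — 2 statements merged into one kernel-verified Lean document; each statement's English description precedes it below -/
import Mathlib

section
/- Let a < b, δ > 0, and φ ∈ C¹([a−δ, b+δ], ℝ) with φ|_{[a,b]} ∈ H_{[a,b]}. Then there exists γ ∈ (0, δ) such that for all real c, d with |a − c| < γ and |b − d| < γ and every ψ ∈ C¹([c,d], ℝ) (not identically zero) with sup_{s∈[c,d]} |ψ(s) − φ(s)| + sup_{s∈[c,d]} |ψ′(s) − φ′(s)| < γ, one has V(ψ,[c,d]) = V(φ,[a,b]). -/
open Set

/-- The set of integers `k ≥ 1` such that `φ` has `k` sign changes witnessed by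
points `s⁰ < s¹ < ⋯ < sᵏ` in `[a,b]` with `φ(sⁱ⁻¹)·φ(sⁱ) < 0`. -/
def scSet (φ : ℝ → ℝ) (a b : ℝ) : Set ℕ :=
  {k | 1 ≤ k ∧ ∃ s : ℕ → ℝ, (∀ i, i ≤ k → s i ∈ Set.Icc a b) ∧
    (∀ i, i < k → s i < s (i + 1)) ∧
    (∀ i, 1 ≤ i → i ≤ k → φ (s (i - 1)) * φ (s i) < 0)}

open Classical in
/-- The sign-change counting function `sc(φ,[a,b])` with values in `ℕ∞`. -/
noncomputable def sc (φ : ℝ → ℝ) (a b : ℝ) : ℕ∞ :=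
  if (∀ s ∈ Set.Icc a b, 0 ≤ φ s) ∨ (∀ s ∈ Set.Icc a b, φ s ≤ 0) then 0
  else sSup ((fun n : ℕ => (n : ℕ∞)) '' scSet φ a b)

open Classical in
/-- The discrete Lyapunov function `V(φ,[a,b])`: equals `sc(φ,[a,b])` if the latter
is odd or infinite, and `sc(φ,[a,b]) + 1` otherwise. -/
noncomputable def V (φ : ℝ → ℝ) (a b : ℝ) : ℕ∞ :=
  if ∃ n : ℕ, sc φ a b = (n : ℕ∞) ∧ Even n then sc φ a b + 1 else sc φ a b

/-- Membership in the regularity class `H_{[a,b]}` for a `C¹` function `φ` with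
derivative `φ'`: boundary nondegeneracy and all zeros simple. -/
def Hmem (φ φ' : ℝ → ℝ) (a b : ℝ) : Prop :=
  (φ b ≠ 0 ∨ φ a * φ' b < 0) ∧ (φ a ≠ 0 ∨ φ' a * φ b > 0) ∧
  ∀ s ∈ Set.Icc a b, φ s = 0 → φ' s ≠ 0


/-!
The zeros of `φ` in `[a, b]` are simple, hence finitely many. If `n` of them lie in `(a, b)`,
`φ` takes alternating signs at `n + 1` points placed between them, so `sc(φ) = n`; when `φ`
vanishes at an endpoint, the boundary conditions of `H` force `n` to be even.

A `C¹`-small perturbation `ψ` keeps the signs at those `n + 1` points, so `sc(ψ) ≥ n`. Conversely,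
every sign change of `ψ` yields a zero of `ψ`; these zeros lie close to zeros of `φ`, and near a
zero of `φ` the derivative `ψ'` stays away from `0`, so by Rolle's theorem there is at most one
such zero of `ψ` there. Hence `n ≤ sc(ψ) ≤ #{zeros of φ in [a, b]}`, and the right-hand side is
at most `n`, or at most `n + 1` with `n` even; in both cases `V(ψ) = V(φ)`.
-/

open Filter Topology

def IsAlternatingChain (φ : ℝ → ℝ) (k : ℕ) (s : ℕ → ℝ) : Prop :=
  (∀ i, i < k → s i < s (i + 1)) ∧ ∀ i, 1 ≤ i → i ≤ k → φ (s (i - 1)) * φ (s i) < 0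

namespace IsAlternatingChain

variable {φ ψ : ℝ → ℝ} {k : ℕ} {s : ℕ → ℝ}

lemma strictMonoOn (hs : IsAlternatingChain φ k s) : StrictMonoOn s (Iic k) :=
  strictMonoOn_Iic_of_lt_succ fun i hi => by simpa using hs.1 i hi

lemma snoc (hs : IsAlternatingChain φ k s) {q : ℝ} (hq : s k < q) (hsign : φ (s k) * φ q < 0) :
    IsAlternatingChain φ (k + 1) (fun i => if i ≤ k then s i else q) := by
  refine ⟨fun i hi => ?_, fun i hi hik => ?_⟩
  · rcases (Nat.lt_succ_iff.1 hi).lt_or_eq with hi | rfl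
    · simpa [hi.le, Nat.succ_le_of_lt hi] using hs.1 i hi
    · simpa using hq
  · rcases (show i ≤ k ∨ i = k + 1 by omega) with hik | rfl
    · simpa [hik, (Nat.sub_le i 1).trans hik] using hs.2 i hi hik
    · simpa using hsign

lemma of_mul_pos (hs : IsAlternatingChain φ k s) (hψ : ∀ i ≤ k, 0 < ψ (s i) * φ (s i)) :
    IsAlternatingChain ψ k s := by
  refine ⟨hs.1, fun i hi hik => ?_⟩
  have h₁ := hψ (i - 1) (by omega)
  have h₂ := hψ i hik
  nlinarith [hs.2 i hi hik, sq_nonneg (φ (s (i - 1))), sq_nonneg (φ (s i)), mul_pos h₁ h₂]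

lemma ne_zero (hs : IsAlternatingChain φ k s) (h₀ : φ (s 0) ≠ 0) : ∀ i ≤ k, φ (s i) ≠ 0
  | 0, _ => h₀
  | i + 1, hi => right_ne_zero_of_mul (by simpa using (hs.2 (i + 1) (by omega) hi).ne)

lemma neg_one_pow_mul_pos (hs : IsAlternatingChain φ k s) (h₀ : φ (s 0) ≠ 0) :
    0 < (-1) ^ k * (φ (s 0) * φ (s k)) := by
  induction k with
  | zero => simpa using mul_self_pos.2 h₀
  | succ k ih =>
    have ih := ih ⟨fun i hi => hs.1 i (by omega), fun i hi hik => hs.2 i hi (by omega)⟩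
    have hlast : φ (s k) * φ (s (k + 1)) < 0 := by simpa using hs.2 (k + 1) (by omega) le_rfl
    rw [pow_succ]
    nlinarith [sq_nonneg (φ (s k))]

lemma even_of_mul_pos (hs : IsAlternatingChain φ k s) (h : 0 < φ (s 0) * φ (s k)) : Even k := by
  by_contra hk
  have := hs.neg_one_pow_mul_pos (left_ne_zero_of_mul (ne_of_gt h))
  rw [(Nat.not_even_iff_odd.1 hk).neg_one_pow] at this
  linarith

end IsAlternatingChain

lemma exists_mem_Ioo_eq_zero_of_mul_neg {f : ℝ → ℝ} {u v : ℝ} (huv : u ≤ v)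
    (hf : ContinuousOn f (Icc u v)) (h : f u * f v < 0) : ∃ w ∈ Ioo u v, f w = 0 := by
  rcases mul_neg_iff.1 h with ⟨hu, hv⟩ | ⟨hu, hv⟩
  · exact intermediate_value_Ioo' huv hf ⟨hv, hu⟩
  · exact intermediate_value_Ioo huv hf ⟨hu, hv⟩

lemma mul_pos_of_forall_ne_zero {f : ℝ → ℝ} {u v : ℝ} (huv : u ≤ v)
    (hf : ContinuousOn f (Icc u v)) (h : ∀ t ∈ Icc u v, f t ≠ 0) : 0 < f u * f v := by
  have hu := h u (left_mem_Icc.2 huv)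
  have hv := h v (right_mem_Icc.2 huv)
  by_contra hneg
  obtain ⟨w, hw, hw0⟩ := exists_mem_Ioo_eq_zero_of_mul_neg huv hf
    ((not_lt.1 hneg).lt_of_ne (mul_ne_zero hu hv))
  exact h w (Ioo_subset_Icc_self hw) hw0

lemma mul_pos_of_abs_sub_lt_abs {x y : ℝ} (h : |x - y| < |y|) : 0 < x * y := by
  cases abs_cases (x - y) <;> cases abs_cases y <;> nlinarith

section SimpleZero

variable {f : ℝ → ℝ} {l z : ℝ}

lemma HasDerivAt.eventually_slope_mul_pos (h : HasDerivAt f l z) (hl : l ≠ 0) :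
    ∀ᶠ t in 𝓝[≠] z, 0 < slope f z t * l :=
  ((hasDerivAt_iff_tendsto_slope.1 h).mul_const l).eventually
    (eventually_gt_nhds (mul_self_pos.2 hl))

lemma HasDerivAt.eventually_nhdsGT_mul_pos (h : HasDerivAt f l z) (hz : f z = 0) (hl : l ≠ 0) :
    ∀ᶠ t in 𝓝[>] z, 0 < f t * l := by
  filter_upwards [(h.eventually_slope_mul_pos hl).filter_mono (nhdsGT_le_nhdsNE z),
    self_mem_nhdsWithin] with t ht (hzt : z < t)
  rw [slope_def_field, hz, sub_zero, div_mul_eq_mul_div, div_pos_iff_of_pos_right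
    (sub_pos.2 hzt)] at ht
  exact ht

lemma HasDerivAt.eventually_nhdsLT_mul_neg (h : HasDerivAt f l z) (hz : f z = 0) (hl : l ≠ 0) :
    ∀ᶠ t in 𝓝[<] z, f t * l < 0 := by
  filter_upwards [(h.eventually_slope_mul_pos hl).filter_mono (nhdsLT_le_nhdsNE z),
    self_mem_nhdsWithin] with t ht (htz : t < z)
  rw [slope_def_field, hz, sub_zero, div_mul_eq_mul_div] at ht
  exact ((div_pos_iff.1 ht).resolve_left fun h => by linarith [h.2]).1

lemma HasDerivAt.exists_Ico_mul_neg (h : HasDerivAt f l z) (hz : f z = 0) (hl : l ≠ 0) {u : ℝ}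
    (hu : u < z) : ∃ p ∈ Ioo u z, ∀ t ∈ Ico p z, f t * l < 0 := by
  obtain ⟨m, hm, hmz⟩ := mem_nhdsLT_iff_exists_Ioo_subset.1 (h.eventually_nhdsLT_mul_neg hz hl)
  obtain ⟨p, hp⟩ := exists_between (max_lt hm hu)
  exact ⟨p, ⟨(le_max_right m u).trans_lt hp.1, hp.2⟩,
    fun t ht => hmz ⟨(le_max_left m u).trans_lt (hp.1.trans_le ht.1), ht.2⟩⟩

end SimpleZero

section SignChanges

variable {φ ψ : ℝ → ℝ} {a b c d : ℝ}

lemma le_sc_of_mem_scSet {k : ℕ} (hk : k ∈ scSet φ a b) : (k : ℕ∞) ≤ sc φ a b := by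
  obtain ⟨hk1, s, hmem, hmono, hsign⟩ := hk
  have h01 : φ (s 0) * φ (s 1) < 0 := by simpa using hsign 1 le_rfl hk1
  have hsplit : ¬ ((∀ t ∈ Icc a b, 0 ≤ φ t) ∨ ∀ t ∈ Icc a b, φ t ≤ 0) := by
    rintro (h | h) <;> nlinarith [h _ (hmem 0 (Nat.zero_le k)), h _ (hmem 1 hk1)]
  rw [sc, if_neg hsplit]
  exact le_sSup ⟨k, ⟨hk1, s, hmem, hmono, hsign⟩, rfl⟩

lemma sc_le_of_forall_mem_scSet {N : ℕ∞} (h : ∀ k ∈ scSet φ a b, (k : ℕ∞) ≤ N) :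
    sc φ a b ≤ N := by
  unfold sc
  split_ifs
  · exact bot_le
  · exact sSup_le <| by rintro _ ⟨k, hk, rfl⟩; exact h k hk

lemma IsAlternatingChain.le_sc {n : ℕ} {s : ℕ → ℝ} (hs : IsAlternatingChain φ n s)
    (hmem : ∀ i ≤ n, s i ∈ Icc a b) : (n : ℕ∞) ≤ sc φ a b := by
  rcases n.eq_zero_or_pos with rfl | hn
  · simp
  · exact le_sc_of_mem_scSet ⟨hn, s, hmem, hs.1, hs.2⟩

lemma sc_le_encard_zeros (hφ : ContinuousOn φ (Icc a b)) :
    sc φ a b ≤ {t ∈ Ioo a b | φ t = 0}.encard := by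
  refine sc_le_of_forall_mem_scSet fun k ⟨_, s, hmem, hmono, hsign⟩ => ?_
  have hs : IsAlternatingChain φ k s := ⟨hmono, hsign⟩
  have hzero : ∀ i ∈ Icc 1 k, ∃ w ∈ Ioo (s (i - 1)) (s i), φ w = 0 := fun i ⟨hi1, hik⟩ =>
    exists_mem_Ioo_eq_zero_of_mul_neg
      (hs.strictMonoOn.monotoneOn (by simp; omega) (by simpa using hik) (Nat.sub_le i 1))
      (hφ.mono (Icc_subset_Icc (hmem _ (by omega)).1 (hmem i hik).2)) (hsign i hi1 hik)
  choose! w hw hw0 using hzero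
  have hwmono : StrictMonoOn w (Icc 1 k) := fun i hi j hj hij => calc
    w i < s i := (hw i hi).2
    _ ≤ s (j - 1) := hs.strictMonoOn.monotoneOn (by simpa using hi.2)
      (by have := hj.2; simp; omega) (by omega)
    _ < w j := (hw j hj).1
  have hcard : ((Finset.Icc 1 k : Finset ℕ) : Set ℕ).encard = k := by
    rw [Set.encard_coe_eq_coe_finsetCard, Nat.card_Icc, Nat.add_sub_cancel]
  rw [← hcard, Finset.coe_Icc]
  refine Set.encard_le_encard_of_injOn (fun i hi => ⟨⟨?_, ?_⟩, hw0 i hi⟩) hwmono.injOn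
  · exact (hmem _ (by have := hi.2; omega)).1.trans_lt (hw i hi).1
  · exact (hw i hi).2.trans_le (hmem i hi.2).2

lemma V_eq_of_sc_eq_coe {n : ℕ} (h : sc φ a b = n) :
    V φ a b = if Even n then (n : ℕ∞) + 1 else n := by
  simp only [V, h, Nat.cast_inj, exists_eq_left']

lemma V_eq_of_sc_bounds {n : ℕ} {N : ℕ∞} (hφ : sc φ a b = n) (hlow : (n : ℕ∞) ≤ sc ψ c d)
    (hup : sc ψ c d ≤ N) (hN : N ≤ n ∨ (N ≤ n + 1 ∧ Even n)) : V ψ c d = V φ a b := by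
  rcases hN with hN | ⟨hN, hn⟩
  · rw [V, V, hφ, le_antisymm (hup.trans hN) hlow]
  · have hfin : sc ψ c d ≠ ⊤ := ne_top_of_le_ne_top (by simp) (hup.trans hN)
    lift sc ψ c d to ℕ using hfin with m hm
    have hm' : n ≤ m ∧ m ≤ n + 1 := ⟨by exact_mod_cast hlow, by exact_mod_cast hup.trans hN⟩
    rw [V_eq_of_sc_eq_coe hm.symm, V_eq_of_sc_eq_coe hφ]
    rcases (show m = n ∨ m = n + 1 by omega) with h | h
    · rw [h]
    · simp [h, hn, Nat.even_add_one]

end SignChanges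

lemma IsCompact.finite_zeros {X M : Type*} [TopologicalSpace X] [T2Space X] [TopologicalSpace M]
    [T1Space M] [Zero M] {K : Set X} {f : X → M} (hK : IsCompact K) (hf : ContinuousOn f K)
    (hiso : ∀ z ∈ K, f z = 0 → ∀ᶠ x in 𝓝[≠] z, f x ≠ 0) : {x ∈ K | f x = 0}.Finite := by
  refine (hK.of_isClosed_subset (hf.preimage_isClosed_of_isClosed hK.isClosed isClosed_singleton)
    fun x hx => hx.1).finite (isDiscrete_iff_nhdsNE.2 fun z hz => ?_)
  rw [inf_principal_eq_bot]
  filter_upwards [hiso z hz.1 hz.2] with x hx h using hx h.2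

theorem exists_isAlternatingChain_of_simple_zeros {φ φ' : ℝ → ℝ} {u : ℝ} (n : ℕ) {v : ℝ}
    (huv : u < v) (hφ : ContinuousOn φ (Icc u v))
    (hsimple : ∀ z ∈ Ioo u v, φ z = 0 → HasDerivAt φ (φ' z) z ∧ φ' z ≠ 0)
    (hn : {t ∈ Ioo u v | φ t = 0}.encard = n) :
    ∃ s : ℕ → ℝ, IsAlternatingChain φ n s ∧ (∀ i ≤ n, s i ∈ Ioo u v) ∧
      (∀ t ∈ Ioc u (s 0), φ t ≠ 0) ∧ ∀ t ∈ Ico (s n) v, φ t ≠ 0 := by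
  induction n generalizing v with
  | zero =>
    have hZ : ∀ t ∈ Ioo u v, φ t ≠ 0 := fun t ht h0 =>
      (Set.encard_eq_zero.1 hn).subset ⟨ht, h0⟩
    refine ⟨fun _ => (u + v) / 2, ⟨fun i hi => absurd hi (Nat.not_lt_zero _), by omega⟩,
      fun _ _ => ⟨by linarith, by linarith⟩, fun t ht => hZ t ⟨ht.1, by linarith [ht.2]⟩,
      fun t ht => hZ t ⟨by linarith [ht.1], ht.2⟩⟩
  | succ n ih =>
    set Z := {t ∈ Ioo u v | φ t = 0}
    -- split off the largest zero `z`: the chain for the zeros left of `p` is extended by a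
    -- point `q` right of `z`, where `φ` has the opposite sign
    obtain ⟨z, ⟨hz, hz0⟩, hzmax⟩ := Z.exists_max_image id (Set.finite_of_encard_eq_coe hn)
      (Set.encard_ne_zero.1 (by rw [hn]; exact_mod_cast n.succ_ne_zero))
    obtain ⟨hder, hφ'z⟩ := hsimple z hz hz0
    obtain ⟨p, ⟨hup, hpz⟩, hpφ⟩ := hder.exists_Ico_mul_neg hz0 hφ'z hz.1
    have hpv : p < v := hpz.trans hz.2
    obtain ⟨q, hqφ, hq⟩ :=
      ((hder.eventually_nhdsGT_mul_pos hz0 hφ'z).and (Ioo_mem_nhdsGT hz.2)).exists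
    have hZp : {t ∈ Ioo u p | φ t = 0} = Z \ {z} := by
      ext t
      refine ⟨fun ⟨ht, h0⟩ => ⟨⟨⟨ht.1, ht.2.trans hpv⟩, h0⟩,
        (ht.2.trans hpz).ne⟩, fun ⟨⟨ht, h0⟩, htz⟩ => ⟨⟨ht.1, ?_⟩, h0⟩⟩
      by_contra hpt
      have htz : t < z := (hzmax t ⟨ht, h0⟩).lt_of_ne htz
      simpa [h0] using hpφ t ⟨not_lt.1 hpt, htz⟩
    obtain ⟨s, hs, hsmem, hleft, hright⟩ := ih hup (hφ.mono (Icc_subset_Icc le_rfl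
      hpv.le)) (fun t ht => hsimple t ⟨ht.1, ht.2.trans hpv⟩)
      (by rw [hZp, Set.encard_sdiff_singleton_of_mem (show z ∈ Z from ⟨hz, hz0⟩), hn]; rfl)
    have hsp : 0 < φ (s n) * φ p := by
      refine mul_pos_of_forall_ne_zero (hsmem n le_rfl).2.le
        (hφ.mono (Icc_subset_Icc (hsmem n le_rfl).1.le hpv.le)) fun t ht => ?_
      rcases ht.2.lt_or_eq with htp | rfl
      · exact hright t ⟨ht.1, htp⟩
      · exact left_ne_zero_of_mul (hpφ _ ⟨le_rfl, hpz⟩).ne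
    refine ⟨_, hs.snoc ((hsmem n le_rfl).2.trans (hpz.trans hq.1))
      (by nlinarith [hpφ p ⟨le_rfl, hpz⟩, sq_nonneg (φ p), sq_nonneg (φ' z)]),
      fun i hi => ?_, by simpa using hleft, fun t ht h0 => ?_⟩
    · by_cases hin : i ≤ n
      · simpa [hin] using (Ioo_subset_Ioo_right hpv.le) (hsmem i hin)
      · simpa [hin] using ⟨hz.1.trans hq.1, hq.2⟩
    · simp only [add_le_iff_nonpos_right, nonpos_iff_eq_zero, one_ne_zero, if_false] at ht
      exact (hzmax t ⟨⟨hz.1.trans (hq.1.trans_le ht.1), ht.2⟩, h0⟩).not_gt (hq.1.trans_le ht.1)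

section Endpoints

variable {φ φ' : ℝ → ℝ} {a b : ℝ} {n : ℕ} {s : ℕ → ℝ}

lemma IsAlternatingChain.even_of_eq_zero_right (hs : IsAlternatingChain φ n s)
    (hsmem : ∀ i ≤ n, s i ∈ Ioo a b) (hleft : ∀ t ∈ Ioc a (s 0), φ t ≠ 0)
    (hright : ∀ t ∈ Ico (s n) b, φ t ≠ 0) (hφ : ContinuousOn φ (Icc a b))
    (hb : HasDerivAt φ (φ' b) b) (hb0 : φ b = 0) (hsign : φ a * φ' b < 0) : Even n := by
  have ha0 : φ a ≠ 0 := left_ne_zero_of_mul hsign.ne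
  obtain ⟨t, htφ, ht⟩ := ((hb.eventually_nhdsLT_mul_neg hb0 (right_ne_zero_of_mul hsign.ne)).and
    (Ioo_mem_nhdsLT (hsmem n le_rfl).2)).exists
  have h₀ : 0 < φ a * φ (s 0) := by
    refine mul_pos_of_forall_ne_zero (hsmem 0 n.zero_le).1.le
      (hφ.mono (Icc_subset_Icc le_rfl (hsmem 0 n.zero_le).2.le)) fun x hx => ?_
    rcases hx.1.eq_or_lt with rfl | hax
    · exact ha0
    · exact hleft x ⟨hax, hx.2⟩
  have hn : 0 < φ (s n) * φ t :=
    mul_pos_of_forall_ne_zero ht.1.le (hφ.mono (Icc_subset_Icc (hsmem n le_rfl).1.le ht.2.le))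
      fun x hx => hright x ⟨hx.1, hx.2.trans_lt ht.2⟩
  have hn' : φ (s n) * φ' b < 0 := by nlinarith [sq_nonneg (φ t)]
  exact hs.even_of_mul_pos (by nlinarith [sq_nonneg (φ a), sq_nonneg (φ' b)])

lemma IsAlternatingChain.even_of_eq_zero_left (hs : IsAlternatingChain φ n s)
    (hsmem : ∀ i ≤ n, s i ∈ Ioo a b) (hleft : ∀ t ∈ Ioc a (s 0), φ t ≠ 0)
    (hright : ∀ t ∈ Ico (s n) b, φ t ≠ 0) (hφ : ContinuousOn φ (Icc a b))
    (ha : HasDerivAt φ (φ' a) a) (ha0 : φ a = 0) (hsign : 0 < φ' a * φ b) : Even n := by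
  have hb0 : φ b ≠ 0 := right_ne_zero_of_mul hsign.ne'
  obtain ⟨t, htφ, ht⟩ := ((ha.eventually_nhdsGT_mul_pos ha0 (left_ne_zero_of_mul hsign.ne')).and
    (Ioo_mem_nhdsGT (hsmem 0 n.zero_le).1)).exists
  have hn : 0 < φ (s n) * φ b := by
    refine mul_pos_of_forall_ne_zero (hsmem n le_rfl).2.le
      (hφ.mono (Icc_subset_Icc (hsmem n le_rfl).1.le le_rfl)) fun x hx => ?_
    rcases hx.2.eq_or_lt with rfl | hxb
    · exact hb0
    · exact hright x ⟨hx.1, hxb⟩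
  have h₀ : 0 < φ t * φ (s 0) :=
    mul_pos_of_forall_ne_zero ht.2.le (hφ.mono (Icc_subset_Icc ht.1.le (hsmem 0 n.zero_le).2.le))
      fun x hx => hleft x ⟨ht.1.trans_le hx.1, hx.2⟩
  have h₀' : 0 < φ' a * φ (s 0) := by nlinarith [sq_nonneg (φ t)]
  exact hs.even_of_mul_pos (by nlinarith [sq_nonneg (φ b), sq_nonneg (φ' a)])

end Endpoints

lemma setOf_mem_Icc_eq_zero_subset {φ : ℝ → ℝ} {a b : ℝ} {S : Set ℝ} (ha : φ a = 0 → a ∈ S)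
    (hb : φ b = 0 → b ∈ S) : {t ∈ Icc a b | φ t = 0} ⊆ S ∪ {t ∈ Ioo a b | φ t = 0} := by
  rintro t ⟨ht, h0⟩
  rcases ht.1.eq_or_lt with rfl | hat
  · exact Or.inl (ha h0)
  rcases ht.2.eq_or_lt with rfl | htb
  · exact Or.inl (hb h0)
  exact Or.inr ⟨⟨hat, htb⟩, h0⟩

lemma Hmem.finite_zeros {φ φ' : ℝ → ℝ} {a b : ℝ} (hH : Hmem φ φ' a b)
    (hφ : ContinuousOn φ (Icc a b)) (hφ' : ∀ t ∈ Icc a b, HasDerivAt φ (φ' t) t) :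
    {t ∈ Icc a b | φ t = 0}.Finite :=
  isCompact_Icc.finite_zeros hφ fun z hz hz0 => (hφ' z hz).eventually_ne (hH.2.2 z hz hz0)

theorem Hmem.exists_isAlternatingChain_sc_eq {φ φ' : ℝ → ℝ} {a b : ℝ} (hH : Hmem φ φ' a b)
    (hab : a < b) (hφ : ContinuousOn φ (Icc a b)) (hφ' : ∀ t ∈ Icc a b, HasDerivAt φ (φ' t) t) :
    ∃ n : ℕ, ∃ s : ℕ → ℝ, IsAlternatingChain φ n s ∧ (∀ i ≤ n, s i ∈ Ioo a b ∧ φ (s i) ≠ 0) ∧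
      sc φ a b = n ∧ ({t ∈ Icc a b | φ t = 0}.encard ≤ n ∨
        ({t ∈ Icc a b | φ t = 0}.encard ≤ n + 1 ∧ Even n)) := by
  have hfin := hH.finite_zeros hφ hφ'
  obtain ⟨hb, ha, hsimple⟩ := hH
  obtain ⟨n, hn⟩ : ∃ n : ℕ, {t ∈ Ioo a b | φ t = 0}.encard = n :=
    ⟨_, (hfin.subset fun t ht => ⟨Ioo_subset_Icc_self ht.1, ht.2⟩).cast_ncard_eq.symm⟩
  obtain ⟨s, hs, hsmem, hleft, hright⟩ := exists_isAlternatingChain_of_simple_zeros n hab hφ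
    (fun z hz hz0 => ⟨hφ' z (Ioo_subset_Icc_self hz), hsimple z (Ioo_subset_Icc_self hz) hz0⟩) hn
  have hZ : ∀ S : Set ℝ, (φ a = 0 → a ∈ S) → (φ b = 0 → b ∈ S) →
      {t ∈ Icc a b | φ t = 0}.encard ≤ n + S.encard := fun S ha hb => by
    rw [← hn, add_comm]
    exact (Set.encard_le_encard (setOf_mem_Icc_eq_zero_subset ha hb)).trans
      (Set.encard_union_le _ _)
  have hs0 := hs.ne_zero (hleft _ ⟨(hsmem 0 n.zero_le).1, le_rfl⟩)
  refine ⟨n, s, hs, fun i hi => ⟨hsmem i hi, hs0 i hi⟩, le_antisymm (hn ▸ sc_le_encard_zeros hφ)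
    (hs.le_sc fun i hi => Ioo_subset_Icc_self (hsmem i hi)), ?_⟩
  by_cases ha0 : φ a = 0
  · have hsign := ha.resolve_left (not_not.2 ha0)
    have hb0 : φ b ≠ 0 := right_ne_zero_of_mul hsign.ne'
    exact Or.inr ⟨by simpa using hZ {a} (fun _ => rfl) fun h => absurd h hb0,
      hs.even_of_eq_zero_left hsmem hleft hright hφ (hφ' a (left_mem_Icc.2 hab.le)) ha0 hsign⟩
  by_cases hb0 : φ b = 0
  · have hsign := hb.resolve_left (not_not.2 hb0)
    exact Or.inr ⟨by simpa using hZ {b} (fun ha0' => absurd ha0' ha0) fun _ => rfl,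
      hs.even_of_eq_zero_right hsmem hleft hright hφ (hφ' b (right_mem_Icc.2 hab.le)) hb0 hsign⟩
  · exact Or.inl (by simpa using hZ ∅ (fun h => absurd h ha0) fun h => absurd h hb0)

lemma encard_le_encard_of_forall_exists_rel {α β : Type*} {S : Set α} {T : Set β}
    {R : α → β → Prop} (hex : ∀ x ∈ S, ∃ y ∈ T, R x y)
    (huniq : ∀ x ∈ S, ∀ x' ∈ S, ∀ y ∈ T, R x y → R x' y → x = x') : S.encard ≤ T.encard := by
  rcases isEmpty_or_nonempty β with hβ | hβ
  · rw [eq_empty_of_forall_notMem fun x hx => (hex x hx).elim fun y _ => hβ.elim y]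
    simp
  choose! g hgT hg using hex
  exact Set.encard_le_encard_of_injOn hgT fun x hx x' hx' h =>
    huniq x hx x' hx' (g x) (hgT x hx) (hg x hx) (h ▸ hg x' hx')

lemma injOn_of_hasDerivAt_ne_zero {f f' : ℝ → ℝ} {I : Set ℝ} (hI : I.OrdConnected)
    (hf : ∀ x ∈ I, HasDerivAt f (f' x) x) (hf' : ∀ x ∈ I, f' x ≠ 0) : I.InjOn f := by
  suffices ∀ x ∈ I, ∀ y ∈ I, x < y → f x ≠ f y from fun x hx y hy hxy => by
    by_contra hne
    rcases lt_or_gt_of_ne hne with h | h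
    exacts [this x hx y hy h hxy, this y hy x hx h hxy.symm]
  intro x hx y hy hxy hfxy
  obtain ⟨ξ, hξ, hξ0⟩ := exists_hasDerivAt_eq_zero hxy
    (fun t ht => (hf t (hI.out hx hy ht)).continuousAt.continuousWithinAt) hfxy
    fun t ht => hf t (hI.out hx hy (Ioo_subset_Icc_self ht))
  exact hf' ξ (hI.out hx hy (Ioo_subset_Icc_self hξ)) hξ0

lemma sc_le_encard_of_deriv_ne_zero {ψ ψ' : ℝ → ℝ} {c d r : ℝ} {Z : Set ℝ}
    (hψ : ∀ t ∈ Icc c d, HasDerivWithinAt ψ (ψ' t) (Icc c d) t)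
    (hnear : ∀ u ∈ Ioo c d, ψ u = 0 → ∃ z ∈ Z, dist u z < r)
    (hψ' : ∀ z ∈ Z, ∀ ξ ∈ Ioo c d, dist ξ z < r → ψ' ξ ≠ 0) : sc ψ c d ≤ Z.encard := by
  refine (sc_le_encard_zeros fun t ht => (hψ t ht).continuousWithinAt).trans
    (encard_le_encard_of_forall_exists_rel (R := fun u z => dist u z < r)
      (fun u hu => hnear u hu.1 hu.2) fun u hu u' hu' z hz huz hu'z => ?_)
  have hI : (Ioo c d ∩ Metric.ball z r).OrdConnected := by
    rw [Real.ball_eq_Ioo]; infer_instance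
  exact injOn_of_hasDerivAt_ne_zero hI
    (fun ξ hξ => (hψ ξ (Ioo_subset_Icc_self hξ.1)).hasDerivAt (Icc_mem_nhds hξ.1.1 hξ.1.2))
    (fun ξ hξ => hψ' z hz ξ hξ.1 hξ.2) ⟨hu.1, huz⟩ ⟨hu'.1, hu'z⟩ (hu.2.trans hu'.2.symm)

lemma IsCompact.exists_pos_forall_lt_mem {X : Type*} [TopologicalSpace X] {K U : Set X}
    {f : X → ℝ} (hK : IsCompact K) (hf : ContinuousOn f K) (hU : IsOpen U)
    (h : ∀ x ∈ K, f x ≤ 0 → x ∈ U) : ∃ ε > 0, ∀ x ∈ K, f x < ε → x ∈ U := by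
  rcases (K \ U).eq_empty_or_nonempty with hKU | hKU
  · exact ⟨1, one_pos, fun x hx _ => by_contra fun hxU => hKU.subset ⟨hx, hxU⟩⟩
  obtain ⟨x₀, hx₀, hmin⟩ := (hK.diff hU).exists_isMinOn hKU (hf.mono sdiff_subset)
  exact ⟨f x₀, not_le.1 fun h0 => hx₀.2 (h x₀ hx₀.1 h0),
    fun x hx hfx => by_contra fun hxU => (hmin ⟨hx, hxU⟩).not_gt hfx⟩

lemma exists_pos_forall_abs_lt_exists_zero_near {φ : ℝ → ℝ} {a b a' b' r : ℝ}
    (hφ : ContinuousOn φ (Icc a' b')) (hr : 0 < r) :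
    ∃ ε > 0, ∀ t ∈ Icc a' b', |φ t| < ε → a - ε < t → t < b + ε →
      ∃ z ∈ Icc a b, φ z = 0 ∧ dist t z < r := by
  -- `max |φ t| (max (a - t) (t - b)) ≤ 0` says exactly that `t` is a zero of `φ` in `[a, b]`
  obtain ⟨ε, hε, hU⟩ := isCompact_Icc.exists_pos_forall_lt_mem (K := Icc a' b')
    (f := fun t => max |φ t| (max (a - t) (t - b)))
    (U := ⋃ z ∈ {z ∈ Icc a b | φ z = 0}, Metric.ball z r) (by fun_prop)
    (isOpen_biUnion fun _ _ => Metric.isOpen_ball) fun t _ ht => by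
      have ht' : φ t = 0 ∧ a ≤ t ∧ t ≤ b := by simpa using ht
      exact mem_iUnion₂.2 ⟨t, ⟨⟨ht'.2.1, ht'.2.2⟩, ht'.1⟩, Metric.mem_ball_self hr⟩
  refine ⟨ε, hε, fun t ht hφt hat htb => ?_⟩
  obtain ⟨z, hz, hzt⟩ := mem_iUnion₂.1 (hU t ht (max_lt hφt (max_lt (by linarith) (by linarith))))
  exact ⟨z, hz.1, hz.2, hzt⟩

lemma ContinuousWithinAt.eventually_forall_dist_lt_le_abs {X : Type*} [PseudoMetricSpace X]
    {f : X → ℝ} {K : Set X} {z : X} (hf : ContinuousWithinAt f K z) (hz : f z ≠ 0) :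
    ∀ᶠ r in 𝓝[>] (0 : ℝ), ∀ x ∈ K, dist x z < r → r ≤ |f x| := by
  obtain ⟨ρ, hρ, hfρ⟩ := Metric.continuousWithinAt_iff.1 hf (|f z| / 2) (by positivity)
  filter_upwards [Ioo_mem_nhdsGT (lt_min hρ (half_pos (abs_pos.2 hz)))] with r hr x hx hxz
  have hfx := hfρ hx (hxz.trans (hr.2.trans_le (min_le_left _ _)))
  rw [Real.dist_eq] at hfx
  linarith [abs_sub_abs_le_abs_sub (f z) (f x), abs_sub_comm (f x) (f z),
    hr.2.trans_le (min_le_right _ _)]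

lemma abs_lt_of_iSup_add_iSup_lt {X : Type*} [TopologicalSpace X] {S : Set X} (hS : IsCompact S)
    {u v : X → ℝ} (hu : ContinuousOn u S) (hv : ContinuousOn v S) {γ : ℝ}
    (h : (⨆ x : S, |u x|) + (⨆ x : S, |v x|) < γ) : ∀ x ∈ S, |u x| < γ ∧ |v x| < γ := by
  have hbdd : ∀ {w : X → ℝ}, ContinuousOn w S → BddAbove (range fun x : S => |w x|) :=
    fun {w} hw => image_eq_range (fun x => |w x|) S ▸ (hS.image_of_continuousOn hw.abs).bddAbove
  intro x hx
  have hu0 := Real.iSup_nonneg fun x : S => abs_nonneg (u x)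
  have hv0 := Real.iSup_nonneg fun x : S => abs_nonneg (v x)
  exact ⟨by linarith [le_ciSup (hbdd hu) ⟨x, hx⟩], by linarith [le_ciSup (hbdd hv) ⟨x, hx⟩]⟩

lemma eventually_nhdsGT_zero_lt {x : ℝ} (hx : 0 < x) : ∀ᶠ γ in 𝓝[>] (0 : ℝ), γ < x :=
  nhdsWithin_le_nhds (eventually_lt_nhds hx)

lemma IsAlternatingChain.eventually_le_sc {φ : ℝ → ℝ} {n : ℕ} {s : ℕ → ℝ} {a b : ℝ}
    (hs : IsAlternatingChain φ n s) (hsmem : ∀ i ≤ n, s i ∈ Ioo a b ∧ φ (s i) ≠ 0) :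
    ∀ᶠ γ in 𝓝[>] (0 : ℝ), ∀ (c d : ℝ) (ψ : ℝ → ℝ), c < a + γ → b - γ < d →
      (∀ t ∈ Icc c d, |ψ t - φ t| < γ) → (n : ℕ∞) ≤ sc ψ c d := by
  have hγ : ∀ᶠ γ in 𝓝[>] (0 : ℝ), ∀ i ∈ Iic n, γ < |φ (s i)| ∧ γ < s i - a ∧ γ < b - s i :=
    (eventually_all_finite (finite_Iic n)).2 fun i hi =>
      (eventually_nhdsGT_zero_lt (abs_pos.2 (hsmem i hi).2)).and <|
        (eventually_nhdsGT_zero_lt (sub_pos.2 (hsmem i hi).1.1)).and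
          (eventually_nhdsGT_zero_lt (sub_pos.2 (hsmem i hi).1.2))
  filter_upwards [hγ] with γ hγ c d ψ hc hd hψ
  have hsc : ∀ i ≤ n, s i ∈ Icc c d := fun i hi =>
    ⟨by linarith [(hγ i hi).2.1], by linarith [(hγ i hi).2.2]⟩
  exact (hs.of_mul_pos fun i hi =>
    mul_pos_of_abs_sub_lt_abs ((hψ _ (hsc i hi)).trans (hγ i hi).1)).le_sc hsc

theorem eventually_sc_le_encard_zeros {φ φ' : ℝ → ℝ} {a b δ : ℝ} (hδ : 0 < δ)
    (hφ : ContinuousOn φ (Icc (a - δ) (b + δ))) (hφ' : ContinuousOn φ' (Icc (a - δ) (b + δ)))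
    (hfin : {t ∈ Icc a b | φ t = 0}.Finite) (hsimple : ∀ z ∈ Icc a b, φ z = 0 → φ' z ≠ 0) :
    ∀ᶠ γ in 𝓝[>] (0 : ℝ), ∀ c d : ℝ, a - γ < c → d < b + γ → ∀ ψ ψ' : ℝ → ℝ,
      (∀ t ∈ Icc c d, HasDerivWithinAt ψ (ψ' t) (Icc c d) t) →
      (∀ t ∈ Icc c d, |ψ t - φ t| < γ ∧ |ψ' t - φ' t| < γ) →
      sc ψ c d ≤ {t ∈ Icc a b | φ t = 0}.encard := by
  have hK : Icc a b ⊆ Icc (a - δ) (b + δ) := Icc_subset_Icc (by linarith) (by linarith)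
  obtain ⟨r, hr, hr0⟩ := (((eventually_all_finite hfin).2 fun z hz =>
    (hφ' z (hK hz.1)).eventually_forall_dist_lt_le_abs (hsimple z hz.1 hz.2)).and
      self_mem_nhdsWithin).exists
  obtain ⟨ε, hε, hεZ⟩ := exists_pos_forall_abs_lt_exists_zero_near (a := a) (b := b) hφ hr0
  filter_upwards [eventually_nhdsGT_zero_lt hδ, eventually_nhdsGT_zero_lt hr0,
    eventually_nhdsGT_zero_lt hε] with γ hγδ hγr hγε c d hc hd ψ ψ' hψ hψφ
  have hcd : Ioo c d ⊆ Icc (a - δ) (b + δ) :=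
    Ioo_subset_Icc_self.trans (Icc_subset_Icc (by linarith) (by linarith))
  refine sc_le_encard_of_deriv_ne_zero (r := r) hψ (fun u hu hu0 => ?_) fun z hz ξ hξ hξz => ?_
  · have hφu := (hψφ u (Ioo_subset_Icc_self hu)).1
    rw [hu0, zero_sub, abs_neg] at hφu
    obtain ⟨z, hz, hz0, huz⟩ := hεZ u (hcd hu) (hφu.trans hγε) (by linarith [hu.1])
      (by linarith [hu.2])
    exact ⟨z, ⟨hz, hz0⟩, huz⟩
  · intro hξ0
    have hψ'ξ := (hψφ ξ (Ioo_subset_Icc_self hξ)).2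
    rw [hξ0, zero_sub, abs_neg] at hψ'ξ
    linarith [hr z hz ξ (hcd hξ) hξz]

/-- Local constancy of `V` near a regular function: if `φ` is `C¹` on `[a-δ, b+δ]`
with `φ|_{[a,b]} ∈ H_{[a,b]}`, then there is `γ ∈ (0,δ)` such that
`V(ψ,[c,d]) = V(φ,[a,b])` for all `C¹` functions `ψ` on `[c,d]` that are
`γ`-close to `φ` in the `C¹` sense, provided `|a - c| < γ` and `|b - d| < γ`. -/
theorem V_locally_constant_near_regular
    (a b δ : ℝ) (hab : a < b) (hδ : 0 < δ)
    (φ φ' : ℝ → ℝ)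
    (hφ_deriv : ∀ s ∈ Set.Icc (a - δ) (b + δ),
      HasDerivWithinAt φ (φ' s) (Set.Icc (a - δ) (b + δ)) s)
    (hφ'_cont : ContinuousOn φ' (Set.Icc (a - δ) (b + δ)))
    (hH : Hmem φ φ' a b) :
    ∃ γ : ℝ, 0 < γ ∧ γ < δ ∧
      ∀ c d : ℝ, |a - c| < γ → |b - d| < γ →
        ∀ ψ ψ' : ℝ → ℝ,
          (∀ s ∈ Set.Icc c d, HasDerivWithinAt ψ (ψ' s) (Set.Icc c d) s) →
          ContinuousOn ψ' (Set.Icc c d) →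
          (∃ s ∈ Set.Icc c d, ψ s ≠ 0) →
          (⨆ s : Set.Icc c d, |ψ (s : ℝ) - φ (s : ℝ)|) +
            (⨆ s : Set.Icc c d, |ψ' (s : ℝ) - φ' (s : ℝ)|) < γ →
          V ψ c d = V φ a b := by
  have hK : Icc a b ⊆ Icc (a - δ) (b + δ) := Icc_subset_Icc (by linarith) (by linarith)
  have hφc : ContinuousOn φ (Icc (a - δ) (b + δ)) := fun t ht => (hφ_deriv t ht).continuousWithinAt
  have hφ : ∀ t ∈ Icc a b, HasDerivAt φ (φ' t) t := fun t ht =>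
    (hφ_deriv t (hK ht)).hasDerivAt (Icc_mem_nhds (by linarith [ht.1]) (by linarith [ht.2]))
  obtain ⟨n, s, hs, hsmem, hscφ, hZ⟩ := hH.exists_isAlternatingChain_sc_eq hab (hφc.mono hK) hφ
  obtain ⟨γ, ⟨hγδ, hlow, hup⟩, hγ⟩ := (((eventually_nhdsGT_zero_lt hδ).and <|
    (hs.eventually_le_sc hsmem).and <| eventually_sc_le_encard_zeros hδ hφc hφ'_cont
      (hH.finite_zeros (hφc.mono hK) hφ) hH.2.2).and self_mem_nhdsWithin).exists
  refine ⟨γ, hγ, hγδ, fun c d hac hbd ψ ψ' hψ hψ' _ hclose => ?_⟩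
  rw [abs_sub_lt_iff] at hac hbd
  have hcd : Icc c d ⊆ Icc (a - δ) (b + δ) := Icc_subset_Icc (by linarith) (by linarith)
  have hψc : ContinuousOn ψ (Icc c d) := fun t ht => (hψ t ht).continuousWithinAt
  have hψφ := abs_lt_of_iSup_add_iSup_lt isCompact_Icc (hψc.sub (hφc.mono hcd))
    (hψ'.sub (hφ'_cont.mono hcd)) hclose
  exact V_eq_of_sc_bounds hscφ (hlow c d ψ (by linarith) (by linarith) fun t ht => (hψφ t ht).1)
    (hup c d (by linarith) (by linarith) ψ ψ' hψ hψφ) hZ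
end

section
/- Let I = [a,b] and let c, τ : I → ℝ be continuous with c(t) < 0 and τ(t) > 0 for all t ∈ I, such that η : I → ℝ, η(t) = t − τ(t), is strictly increasing on I. Let J = η(I) ∪ I and let y : J → ℝ be continuous, continuously differentiable on I, satisfy y′(t) = c(t)·y(η(t)) for all t ∈ I, and suppose that for every t ∈ I the restriction of y to [η(t), t] is not identically zero. Let k ≥ 3 be an integer and suppose there exist points α₁, …, α_k in [a,b] with η(α_j) = α_{j−1} for j = 2, …, k. Then for every t ∈ [α₃, b] with y(t) = 0 and y(η(t)) = 0, either V(y,[η(t), t]) = ∞ or V(y,[η(t), t]) < V(y,[η³(t), η²(t)]), where η², η³ denote the second and third iterates of η. -/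
/-!
Rolle's theorem turns `n` sign changes of `y` on `[u, v]`, followed by a zero at `v`, into
`n` alternations of `y'` there, and into `n + 1` if `y` also vanishes at `u`. Since `c < 0`,
the equation `y' = c · (y ∘ η)` makes `y ∘ η` alternate with `y'`, so these become sign
changes of `y` on `[η u, η v]`. At a double zero, `K = sc(y, [η t, t])` thus yields `K + 1`
sign changes on `[η² t, η t]` and at least as many on `[η³ t, η² t]`, one more when `K + 1`
is odd; as `V` is the least odd integer `≥ sc`, this is a strict drop.
-/

open Set

section SignChase

variable {α : Type*} [CommRing α] [LinearOrder α] [IsStrictOrderedRing α] {a b c : α}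

lemma mul_neg_of_mul_pos_of_mul_neg (hab : 0 < a * b) (hbc : b * c < 0) : a * c < 0 := by
  nlinarith [mul_neg_of_pos_of_neg hab hbc, sq_nonneg b]

lemma mul_pos_of_mul_neg_of_mul_neg (hab : a * b < 0) (hbc : b * c < 0) : 0 < a * c := by
  nlinarith [mul_pos_of_neg_of_neg hab hbc, sq_nonneg b]

end SignChase

/-- A witness of `n ∈ scSet φ u v`, also for `n = 0`, where it records a point with
`φ ≠ 0`. -/
structure IsSignChain (φ : ℝ → ℝ) (u v : ℝ) (n : ℕ) (p : ℕ → ℝ) : Prop where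
  mem : ∀ i ≤ n, p i ∈ Icc u v
  lt : ∀ i < n, p i < p (i + 1)
  mul_neg : ∀ i < n, φ (p i) * φ (p (i + 1)) < 0
  ne_zero : φ (p 0) ≠ 0

namespace IsSignChain

variable {φ : ℝ → ℝ} {u v : ℝ} {n : ℕ} {p : ℕ → ℝ}

lemma apply_ne_zero (h : IsSignChain φ u v n p) {i : ℕ} (hi : i ≤ n) : φ (p i) ≠ 0 := by
  rcases i with _ | i
  · exact h.ne_zero
  · exact right_ne_zero_of_mul (h.mul_neg i hi).ne

lemma cons (h : IsSignChain φ u v n p) {w : ℝ} (hw : w ∈ Icc u (p 0))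
    (hφw : φ w * φ (p 0) < 0) :
    IsSignChain φ u v (n + 1) (Function.update (fun i => p (i - 1)) 0 w) where
  mem i hi := by
    rcases i with _ | i
    · simpa using ⟨hw.1, hw.2.trans (h.mem 0 (by omega)).2⟩
    · simpa using h.mem i (by omega)
  lt i hi := by
    rcases i with _ | i
    · simpa using hw.2.lt_of_ne (by rintro rfl; nlinarith)
    · simpa using h.lt i (by omega)
  mul_neg i hi := by
    rcases i with _ | i
    · simpa using hφw
    · simpa using h.mul_neg i (by omega)
  ne_zero := by simpa using left_ne_zero_of_mul hφw.ne

lemma snoc (h : IsSignChain φ u v n p) {w : ℝ} (hw : w ∈ Icc (p n) v)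
    (hφw : φ (p n) * φ w < 0) :
    IsSignChain φ u v (n + 1) (Function.update p (n + 1) w) := by
  have hupd : ∀ j ≤ n, Function.update p (n + 1) w j = p j :=
    fun j hj => Function.update_of_ne (by omega) _ _
  refine ⟨fun i hi => ?_, fun i hi => ?_, fun i hi => ?_,
    by rw [hupd 0 n.zero_le]; exact h.ne_zero⟩
  · rcases hi.lt_or_eq with hi | rfl
    · rw [hupd i (by omega)]; exact h.mem i (by omega)
    · rw [Function.update_self]; exact ⟨(h.mem n le_rfl).1.trans hw.1, hw.2⟩
  · rcases (Nat.lt_succ_iff.mp hi).lt_or_eq with hi | rfl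
    · rw [hupd i hi.le, hupd (i + 1) hi]; exact h.lt i hi
    · rw [hupd i le_rfl, Function.update_self]
      exact hw.1.lt_of_ne (by rintro rfl; nlinarith)
  · rcases (Nat.lt_succ_iff.mp hi).lt_or_eq with hi | rfl
    · rw [hupd i hi.le, hupd (i + 1) hi]; exact h.mul_neg i hi
    · rw [hupd i le_rfl, Function.update_self]; exact hφw

lemma neg_one_pow_mul_pos (h : IsSignChain φ u v n p) {i : ℕ} (hi : i ≤ n) :
    0 < (-1) ^ i * (φ (p 0) * φ (p i)) := by
  induction i with
  | zero => simpa using mul_self_pos.mpr h.ne_zero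
  | succ i ih =>
    have hstep := h.mul_neg i hi
    have hprev := ih (by omega)
    rw [pow_succ]
    nlinarith [mul_neg_of_pos_of_neg hprev hstep, sq_nonneg (φ (p i))]

lemma mem_scSet (h : IsSignChain φ u v n p) (hn : 1 ≤ n) : n ∈ scSet φ u v := by
  refine ⟨hn, p, h.mem, h.lt, fun i hi₁ hi₂ => ?_⟩
  obtain ⟨j, rfl⟩ : ∃ j, i = j + 1 := ⟨i - 1, by omega⟩
  simpa using h.mul_neg j hi₂

lemma le_sc (h : IsSignChain φ u v n p) : (n : ℕ∞) ≤ sc φ u v := by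
  rcases Nat.eq_zero_or_pos n with rfl | hn
  · exact bot_le
  have h₀₁ := h.mul_neg 0 hn
  have hp₀ := h.mem 0 (Nat.zero_le n)
  have hp₁ := h.mem 1 hn
  rw [sc, if_neg]
  · exact le_sSup ⟨n, h.mem_scSet hn, rfl⟩
  · rintro (hnonneg | hnonpos)
    · nlinarith [hnonneg _ hp₀, hnonneg _ hp₁]
    · nlinarith [hnonpos _ hp₀, hnonpos _ hp₁]

end IsSignChain

lemma exists_isSignChain_of_sc_eq {φ : ℝ → ℝ} {u v : ℝ} {n : ℕ} (h : sc φ u v = n)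
    (hφ : ∃ s ∈ Icc u v, φ s ≠ 0) : ∃ p, IsSignChain φ u v n p := by
  rcases Nat.eq_zero_or_pos n with rfl | hn
  · obtain ⟨s, hs, hφs⟩ := hφ
    exact ⟨fun _ => s, ⟨fun _ _ => hs, nofun, nofun, hφs⟩⟩
  have hsup : sSup ((fun m : ℕ => (m : ℕ∞)) '' scSet φ u v) = n := by
    rw [sc] at h
    split_ifs at h
    · exact absurd h.symm (by exact_mod_cast hn.ne')
    · exact h
  have hne : ((fun m : ℕ => (m : ℕ∞)) '' scSet φ u v).Nonempty := by
    by_contra hempty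
    rw [not_nonempty_iff_eq_empty.mp hempty, sSup_empty, bot_eq_zero] at hsup
    exact hn.ne' (by exact_mod_cast hsup.symm)
  have := hne.to_subtype
  obtain ⟨m, hm, hmn⟩ := ENat.sSup_mem_of_nonempty_of_lt_top (hsup ▸ ENat.natCast_lt_top n)
  obtain rfl : m = n := Nat.cast_injective (hmn.trans hsup)
  obtain ⟨-, p, hmem, hlt, hmul⟩ := hm
  have h₀₁ : φ (p 0) * φ (p 1) < 0 := by simpa using hmul 1 le_rfl hn
  exact ⟨p, hmem, hlt, fun i hi => by simpa using hmul (i + 1) (by omega) hi,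
    left_ne_zero_of_mul h₀₁.ne⟩

lemma sc_le_V (φ : ℝ → ℝ) (u v : ℝ) : sc φ u v ≤ V φ u v := by
  rw [V]
  split_ifs
  exacts [le_self_add, le_rfl]

lemma V_eq_of_sc_eq {φ : ℝ → ℝ} {u v : ℝ} {n : ℕ} (h : sc φ u v = n) :
    V φ u v = (2 * (n / 2) + 1 : ℕ) := by
  rw [V, h]
  split_ifs with heven
  · obtain ⟨m, hm, hm_even⟩ := heven
    obtain rfl : n = m := by exact_mod_cast hm
    obtain ⟨j, rfl⟩ := hm_even
    norm_cast
    omega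
  · have hodd : n % 2 = 1 :=
      Nat.odd_iff.mp (Nat.not_even_iff_odd.mp fun he => heven ⟨n, rfl, he⟩)
    norm_cast
    omega

lemma exists_mem_Ioo_deriv_mul_sub_pos {y y' : ℝ → ℝ} {a b : ℝ} (hab : a < b)
    (hy : ContinuousOn y (Icc a b)) (hy' : ∀ x ∈ Ioo a b, HasDerivAt y (y' x) x)
    (hne : y a ≠ y b) : ∃ ξ ∈ Ioo a b, 0 < y' ξ * (y b - y a) := by
  obtain ⟨ξ, hξ, hslope⟩ := exists_hasDerivAt_eq_slope y y' hab hy hy'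
  refine ⟨ξ, hξ, ?_⟩
  rw [hslope, div_mul_eq_mul_div]
  exact div_pos (mul_self_pos.mpr (sub_ne_zero.mpr hne.symm)) (sub_pos.mpr hab)

section SignOfDeriv

variable {y y' : ℝ → ℝ} {u v a b : ℝ}

lemma exists_deriv_mul_pos_of_mul_nonpos (hy : ContinuousOn y (Icc u v))
    (hy' : ∀ x ∈ Ioo u v, HasDerivAt y (y' x) x) (hua : u ≤ a) (hab : a ≤ b) (hbv : b ≤ v)
    (hyb : y b ≠ 0) (hyab : y a * y b ≤ 0) : ∃ ξ ∈ Ioo a b, 0 < y' ξ * y b := by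
  have hyb2 := mul_self_pos.mpr hyb
  have hab' : a < b := hab.lt_of_ne (by rintro rfl; linarith)
  obtain ⟨ξ, hξ, hpos⟩ := exists_mem_Ioo_deriv_mul_sub_pos hab'
    (hy.mono (Icc_subset_Icc hua hbv))
    (fun x hx => hy' x ⟨hua.trans_lt hx.1, hx.2.trans_le hbv⟩)
    (by intro h; rw [h] at hyab; linarith)
  refine ⟨ξ, hξ, ?_⟩
  nlinarith

lemma exists_deriv_mul_neg_of_mul_nonpos (hy : ContinuousOn y (Icc u v))
    (hy' : ∀ x ∈ Ioo u v, HasDerivAt y (y' x) x) (hua : u ≤ a) (hab : a ≤ b) (hbv : b ≤ v)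
    (hya : y a ≠ 0) (hyab : y a * y b ≤ 0) : ∃ ξ ∈ Ioo a b, y' ξ * y a < 0 := by
  have hya2 := mul_self_pos.mpr hya
  have hab' : a < b := hab.lt_of_ne (by rintro rfl; linarith)
  obtain ⟨ξ, hξ, hpos⟩ := exists_mem_Ioo_deriv_mul_sub_pos hab'
    (hy.mono (Icc_subset_Icc hua hbv))
    (fun x hx => hy' x ⟨hua.trans_lt hx.1, hx.2.trans_le hbv⟩)
    (by intro h; rw [← h] at hyab; linarith)
  refine ⟨ξ, hξ, ?_⟩
  nlinarith

end SignOfDeriv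

namespace IsSignChain

variable {y y' c η : ℝ → ℝ} {u v : ℝ} {n : ℕ} {p : ℕ → ℝ}

lemma exists_deriv (hy : ContinuousOn y (Icc u v)) (hy' : ∀ x ∈ Ioo u v, HasDerivAt y (y' x) x)
    (hp : IsSignChain y u v n p) (hv : y v = 0) :
    ∃ q, IsSignChain y' u v n q ∧ p 0 < q 0 ∧ ∀ i ≤ n, y' (q i) * y (p i) < 0 := by
  have hstep : ∀ i, ∃ ξ, i ≤ n →
      p i < ξ ∧ ξ ≤ v ∧ (i < n → ξ < p (i + 1)) ∧ y' ξ * y (p i) < 0 := by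
    intro i
    by_cases hi : i < n
    · obtain ⟨ξ, hξ, hsign⟩ := exists_deriv_mul_neg_of_mul_nonpos hy hy' (hp.mem i hi.le).1
        (hp.lt i hi).le (hp.mem (i + 1) hi).2 (hp.apply_ne_zero hi.le) (hp.mul_neg i hi).le
      exact ⟨ξ, fun _ =>
        ⟨hξ.1, hξ.2.le.trans (hp.mem (i + 1) hi).2, fun _ => hξ.2, hsign⟩⟩
    · obtain ⟨ξ, hξ, hsign⟩ := exists_deriv_mul_neg_of_mul_nonpos hy hy' (hp.mem n le_rfl).1
        (hp.mem n le_rfl).2 le_rfl (hp.apply_ne_zero le_rfl) (by simp [hv])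
      refine ⟨ξ, fun hin => ?_⟩
      obtain rfl : i = n := by omega
      exact ⟨hξ.1, hξ.2.le, (absurd · hi), hsign⟩
  choose q hq using hstep
  have hsign : ∀ i ≤ n, y' (q i) * y (p i) < 0 := fun i hi => (hq i hi).2.2.2
  refine ⟨q, ⟨fun i hi => ?_, fun i hi => ?_, fun i hi => ?_,
    left_ne_zero_of_mul (hsign 0 n.zero_le).ne⟩, (hq 0 n.zero_le).1, hsign⟩
  · exact ⟨(hp.mem i hi).1.trans (hq i hi).1.le, (hq i hi).2.1⟩
  · exact ((hq i hi.le).2.2.1 hi).trans (hq (i + 1) hi).1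
  · have h := mul_pos_of_mul_neg_of_mul_neg (hsign i hi.le) (hp.mul_neg i hi)
    exact mul_neg_of_mul_pos_of_mul_neg h (by rw [mul_comm]; exact hsign (i + 1) hi)

lemma exists_deriv_of_left (hy : ContinuousOn y (Icc u v))
    (hy' : ∀ x ∈ Ioo u v, HasDerivAt y (y' x) x) (hp : IsSignChain y u v n p)
    (hu : y u * y (p 0) ≤ 0) (hv : y v = 0) : ∃ q, IsSignChain y' u v (n + 1) q := by
  obtain ⟨q, hq, hpq, hsign⟩ := hp.exists_deriv hy hy' hv
  obtain ⟨ξ, hξ, hξsign⟩ := exists_deriv_mul_pos_of_mul_nonpos hy hy' le_rfl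
    (hp.mem 0 n.zero_le).1 (hp.mem 0 n.zero_le).2 hp.ne_zero hu
  have hcons := mul_neg_of_mul_pos_of_mul_neg hξsign (by rw [mul_comm]; exact hsign 0 n.zero_le)
  exact ⟨_, hq.cons ⟨hξ.1.le, (hξ.2.trans hpq).le⟩ hcons⟩

lemma comp_of_deriv_eq {q : ℕ → ℝ} (hq : IsSignChain y' u v n q)
    (hode : ∀ x ∈ Icc u v, y' x = c x * y (η x)) (hc : ∀ x ∈ Icc u v, c x < 0)
    (hη : StrictMonoOn η (Icc u v)) :
    IsSignChain y (η u) (η v) n (fun i => η (q i)) ∧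
      ∀ i ≤ n, y (η (q i)) * y' (q i) < 0 := by
  have hsign : ∀ i ≤ n, y (η (q i)) * y' (q i) < 0 := by
    intro i hi
    have hne := hq.apply_ne_zero hi
    have hci := hc _ (hq.mem i hi)
    rw [hode _ (hq.mem i hi)] at hne ⊢
    nlinarith [mul_self_pos.mpr (right_ne_zero_of_mul hne)]
  have hu : u ∈ Icc u v := left_mem_Icc.mpr ((hq.mem 0 n.zero_le).1.trans (hq.mem 0 n.zero_le).2)
  have hv : v ∈ Icc u v := right_mem_Icc.mpr hu.2
  refine ⟨⟨fun i hi => ?_, fun i hi => hη (hq.mem i hi.le) (hq.mem (i + 1) hi) (hq.lt i hi),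
    fun i hi => ?_, left_ne_zero_of_mul (hsign 0 n.zero_le).ne⟩, hsign⟩
  · exact ⟨hη.monotoneOn hu (hq.mem i hi) (hq.mem i hi).1,
      hη.monotoneOn (hq.mem i hi) hv (hq.mem i hi).2⟩
  · have h := mul_pos_of_mul_neg_of_mul_neg (hsign i hi.le) (hq.mul_neg i hi)
    exact mul_neg_of_mul_pos_of_mul_neg h (by rw [mul_comm]; exact hsign (i + 1) hi)

end IsSignChain

structure IsNegativeFeedbackSolution (y y' c η : ℝ → ℝ) (u v : ℝ) : Prop where
  continuousOn : ContinuousOn y (Icc u v)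
  hasDerivAt : ∀ x ∈ Ioo u v, HasDerivAt y (y' x) x
  deriv_eq : ∀ x ∈ Icc u v, y' x = c x * y (η x)
  coeff_neg : ∀ x ∈ Icc u v, c x < 0
  strictMonoOn : StrictMonoOn η (Icc u v)

lemma IsNegativeFeedbackSolution.mono {y y' c η : ℝ → ℝ} {a b u v : ℝ}
    (h : IsNegativeFeedbackSolution y y' c η a b) (hu : a ≤ u) (hv : v ≤ b) :
    IsNegativeFeedbackSolution y y' c η u v where
  continuousOn := h.continuousOn.mono (Icc_subset_Icc hu hv)
  hasDerivAt x hx := h.hasDerivAt x (Ioo_subset_Ioo hu hv hx)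
  deriv_eq x hx := h.deriv_eq x (Icc_subset_Icc hu hv hx)
  coeff_neg x hx := h.coeff_neg x (Icc_subset_Icc hu hv hx)
  strictMonoOn := h.strictMonoOn.mono (Icc_subset_Icc hu hv)

namespace IsSignChain

variable {y y' c η : ℝ → ℝ} {u v : ℝ} {n : ℕ} {p : ℕ → ℝ}

lemma transfer (hy : IsNegativeFeedbackSolution y y' c η u v) (hp : IsSignChain y u v n p)
    (hv : y v = 0) : ∃ s, IsSignChain y (η u) (η v) n s ∧ 0 < y (s n) * y (p n) := by
  obtain ⟨q, hq, -, hsign⟩ := hp.exists_deriv hy.continuousOn hy.hasDerivAt hv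
  obtain ⟨hs, hsign'⟩ := hq.comp_of_deriv_eq hy.deriv_eq hy.coeff_neg hy.strictMonoOn
  exact ⟨_, hs, mul_pos_of_mul_neg_of_mul_neg (hsign' n le_rfl) (hsign n le_rfl)⟩

lemma transfer_of_left (hy : IsNegativeFeedbackSolution y y' c η u v)
    (hp : IsSignChain y u v n p) (hu : y u * y (p 0) ≤ 0) (hv : y v = 0) :
    ∃ s, IsSignChain y (η u) (η v) (n + 1) s := by
  obtain ⟨q, hq⟩ := hp.exists_deriv_of_left hy.continuousOn hy.hasDerivAt hu hv
  exact ⟨_, (hq.comp_of_deriv_eq hy.deriv_eq hy.coeff_neg hy.strictMonoOn).1⟩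

/-- Either `η v` already changes sign against `p 0`, or, `n` being odd, it changes sign against
the image of `p n` and can be appended. -/
lemma transfer_succ_of_odd (hy : IsNegativeFeedbackSolution y y' c η (η v) v)
    (hp : IsSignChain y (η v) v n p) (hv : y v = 0) (hn : Odd n) :
    ∃ s, IsSignChain y (η (η v)) (η v) (n + 1) s := by
  by_cases hu : y (η v) * y (p 0) ≤ 0
  · exact hp.transfer_of_left hy hu hv
  obtain ⟨s, hs, hsn⟩ := hp.transfer hy hv
  have hparity : y (p n) * y (p 0) < 0 := by
    simpa [hn.neg_one_pow, mul_comm] using hp.neg_one_pow_mul_pos le_rfl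
  have hs₀ := mul_neg_of_mul_pos_of_mul_neg hsn hparity
  have hlast := mul_neg_of_mul_pos_of_mul_neg (not_le.mp hu) (by rwa [mul_comm] at hs₀)
  exact ⟨_, hs.snoc ⟨(hs.mem n le_rfl).2, le_rfl⟩ (by rwa [mul_comm] at hlast)⟩

end IsSignChain

theorem V_strict_drop_at_double_zero_general
    (a b : ℝ)
    (c τ : ℝ → ℝ)
    (hc_neg : ∀ t ∈ Set.Icc a b, c t < 0) (hτ_pos : ∀ t ∈ Set.Icc a b, 0 < τ t)
    (η : ℝ → ℝ) (hη_def : ∀ t, η t = t - τ t)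
    (hη_mono : StrictMonoOn η (Set.Icc a b))
    (y y' : ℝ → ℝ)
    (hy_cont : ContinuousOn y (η '' Set.Icc a b ∪ Set.Icc a b))
    (hy_deriv : ∀ t ∈ Set.Icc a b, HasDerivWithinAt y (y' t) (Set.Icc a b) t)
    (hy_ode : ∀ t ∈ Set.Icc a b, y' t = c t * y (η t))
    (hy_ne : ∀ t ∈ Set.Icc a b, ∃ s ∈ Set.Icc (η t) t, y s ≠ 0)
    (k : ℕ) (hk : 3 ≤ k)
    (α : ℕ → ℝ)
    (hα_mem : ∀ j, 1 ≤ j → j ≤ k → α j ∈ Set.Icc a b)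
    (hα_chain : ∀ j, 2 ≤ j → j ≤ k → η (α j) = α (j - 1)) :
    ∀ t ∈ Set.Icc (α 3) b, y t = 0 → y (η t) = 0 →
      V y (η t) t = ⊤ ∨ V y (η t) t < V y (η^[3] t) (η^[2] t) := by
  intro t ht hyt hyηt
  have hα₁ := hα_mem 1 le_rfl (by omega)
  have hα₂ := hα_mem 2 (by norm_num) (by omega)
  have hα₃ := hα_mem 3 (by norm_num) hk
  have htI : t ∈ Icc a b := ⟨hα₃.1.trans ht.1, ht.2⟩
  have hα₂_le : α 2 ≤ η t :=
    hα_chain 3 (by norm_num) hk ▸ hη_mono.monotoneOn hα₃ htI ht.1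
  have hηtI : η t ∈ Icc a b :=
    ⟨hα₂.1.trans hα₂_le, by linarith [hη_def t, hτ_pos t htI, htI.2]⟩
  have hα₁_le : α 1 ≤ η (η t) :=
    hα_chain 2 le_rfl (by omega) ▸ hη_mono.monotoneOn hα₂ hηtI hα₂_le
  have hy : IsNegativeFeedbackSolution y y' c η a b :=
    ⟨hy_cont.mono subset_union_right,
      fun x hx => (hy_deriv x (Ioo_subset_Icc_self hx)).hasDerivAt (Icc_mem_nhds hx.1 hx.2),
      hy_ode, hc_neg, hη_mono⟩
  refine or_iff_not_imp_left.mpr fun hfin => ?_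
  obtain ⟨K, hK⟩ := ENat.ne_top_iff_exists.mp (ne_top_of_le_ne_top hfin (sc_le_V y (η t) t))
  obtain ⟨p, hp⟩ := exists_isSignChain_of_sc_eq hK.symm (hy_ne t htI)
  obtain ⟨q, hq⟩ := hp.transfer_of_left (hy.mono hηtI.1 htI.2) (by simp [hyηt]) hyt
  have hy₁ := hy.mono (hα₁.1.trans hα₁_le) hηtI.2
  obtain ⟨m, r, hr, hm⟩ : ∃ m r, IsSignChain y (η (η (η t))) (η (η t)) m r ∧
      2 * (K / 2) + 1 < m := by
    rcases Nat.even_or_odd K with ⟨j, rfl⟩ | ⟨j, rfl⟩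
    · obtain ⟨r, hr⟩ := hq.transfer_succ_of_odd hy₁ hyηt ⟨j, by ring⟩
      exact ⟨_, r, hr, by omega⟩
    · obtain ⟨r, hr, -⟩ := hq.transfer hy₁ hyηt
      exact ⟨_, r, hr, by omega⟩
  calc V y (η t) t = (2 * (K / 2) + 1 : ℕ) := V_eq_of_sc_eq hK.symm
    _ < m := by exact_mod_cast hm
    _ ≤ sc y (η^[3] t) (η^[2] t) := hr.le_sc
    _ ≤ V y (η^[3] t) (η^[2] t) := sc_le_V _ _ _

/-- Strict drop of `V` at double zeros: if `y(t) = y(η(t)) = 0` for some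
`t ∈ [α₃, b]`, then `V(y,[η(t),t]) = ∞` or `V(y,[η(t),t]) < V(y,[η³(t),η²(t)])`. -/
theorem V_strict_drop_at_double_zero
    (a b : ℝ) (hab : a ≤ b)
    (c τ : ℝ → ℝ)
    (hc_cont : ContinuousOn c (Set.Icc a b)) (hτ_cont : ContinuousOn τ (Set.Icc a b))
    (hc_neg : ∀ t ∈ Set.Icc a b, c t < 0) (hτ_pos : ∀ t ∈ Set.Icc a b, 0 < τ t)
    (η : ℝ → ℝ) (hη_def : ∀ t, η t = t - τ t)
    (hη_mono : StrictMonoOn η (Set.Icc a b))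
    (y y' : ℝ → ℝ)
    (hy_cont : ContinuousOn y (η '' Set.Icc a b ∪ Set.Icc a b))
    (hy_deriv : ∀ t ∈ Set.Icc a b, HasDerivWithinAt y (y' t) (Set.Icc a b) t)
    (hy'_cont : ContinuousOn y' (Set.Icc a b))
    (hy_ode : ∀ t ∈ Set.Icc a b, y' t = c t * y (η t))
    (hy_ne : ∀ t ∈ Set.Icc a b, ∃ s ∈ Set.Icc (η t) t, y s ≠ 0)
    (k : ℕ) (hk : 3 ≤ k)
    (α : ℕ → ℝ)
    (hα_mem : ∀ j, 1 ≤ j → j ≤ k → α j ∈ Set.Icc a b)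
    (hα_chain : ∀ j, 2 ≤ j → j ≤ k → η (α j) = α (j - 1)) :
    ∀ t ∈ Set.Icc (α 3) b, y t = 0 → y (η t) = 0 →
      V y (η t) t = ⊤ ∨ V y (η t) t < V y (η^[3] t) (η^[2] t) :=
  V_strict_drop_at_double_zero_general a b c τ hc_neg hτ_pos η hη_def hη_mono y y' hy_cont hy_deriv
    hy_ode hy_ne k hk α hα_mem hα_chain
end
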